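/- arXiv:2601.17505 — 5 statements merged into one kernel-verified Lean document; each statement's English description precedes it below -/
import Mathlib

section
/- Let L be a Lie superalgebra over a field K with char K ≠ 2, 3, Λ an index set, p : Λ → ℤ/2, X : Λ → L a family with X_i ∈ L_{p(i)} for all i, and α : Λ × Λ × Λ → K a family of scalars, finitely supported in the last argument for each fixed pair; for i, j ∈ Λ set f_{ij} := [X_i, X_j] − Σ_{v∈Λ} α_{ij}^v X_v. Fix x, y, z ∈ Λ and assume that for every u ∈ Λ: Σ_{v∈Λ} ( α_{yz}^v α_{xv}^u − α_{xy}^v α_{vz}^u − (−1)^{p(x)p(y)} α_{xz}^v α_{yv}^u ) = 0. Then [f_{xy}, X_z] − [X_x, f_{yz}] = −(−1)^{p(x)p(y)}[X_y, f_{xz}] − (−1)^{p(x)p(y)} Σ_{v∈Λ} α_{xz}^v f_{yv} − Σ_{v∈Λ} α_{xy}^v f_{vz} + Σ_{v∈Λ} α_{yz}^v f_{xv}. -/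
/-- The sign `(−1)^{ij}`: `−1` if `i = j = 1` and `+1` otherwise. -/
def sgn (K : Type*) [Field K] (i j : ZMod 2) : K :=
  if i = 1 ∧ j = 1 then -1 else 1

/-- The element `f_{ij} = [X_i, X_j] − Σ_v α_{ij}^v X_v`. -/
def fP {K L Λ : Type*} [Field K] [AddCommGroup L] [Module K L]
    (br : L →ₗ[K] L →ₗ[K] L) (X : Λ → L) (α : Λ → Λ → Λ →₀ K) (i j : Λ) : L :=
  br (X i) (X j) - (α i j).sum fun v c => c • X v

/-- Triviality of the intersection composition `⟨f_{xy}, f_{yz}⟩_{xyz}` in the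
Gröbner–Shirshov basis analysis of the HNN-extension presentation. -/
theorem composition_fxy_fyz
    (K : Type*) [Field K] (hch2 : ringChar K ≠ 2) (hch3 : ringChar K ≠ 3)
    (L : Type*) [AddCommGroup L] [Module K L]
    (Lsub : ZMod 2 → Submodule K L)
    (hdirect : DirectSum.IsInternal Lsub)
    (br : L →ₗ[K] L →ₗ[K] L)
    (hgrade : ∀ (i j : ZMod 2), ∀ x ∈ Lsub i, ∀ y ∈ Lsub j, br x y ∈ Lsub (i + j))
    (hanti : ∀ (i j : ZMod 2), ∀ x ∈ Lsub i, ∀ y ∈ Lsub j,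
      br x y = - sgn K i j • br y x)
    (hjac : ∀ (i j k : ZMod 2), ∀ x ∈ Lsub i, ∀ y ∈ Lsub j, ∀ z ∈ Lsub k,
      br x (br y z) = br (br x y) z + sgn K i j • br y (br x z))
    (Λ : Type*) (p : Λ → ZMod 2) (X : Λ → L)
    (hX : ∀ i, X i ∈ Lsub (p i))
    (α : Λ → Λ → Λ →₀ K)
    (x y z : Λ)
    (hjacCoord : ∀ u : Λ,
      ∑ᶠ v, (α y z v * α x v u - α x y v * α v z u
        - sgn K (p x) (p y) * (α x z v * α y v u)) = 0) :
    br (fP br X α x y) (X z) - br (X x) (fP br X α y z)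
      = - sgn K (p x) (p y) • br (X y) (fP br X α x z)
        - sgn K (p x) (p y) • ∑ᶠ v, α x z v • fP br X α y v
        - ∑ᶠ v, α x y v • fP br X α v z
        + ∑ᶠ v, α y z v • fP br X α x v := by
  classical
  set s : K := sgn K (p x) (p y) with hs
  set S : Finset Λ := (α x y).support ∪ (α y z).support ∪ (α x z).support with hSdef
  have hxyS : (α x y).support ⊆ S := by
    intro v hv; simp [hSdef, hv]
  have hyzS : (α y z).support ⊆ S := by
    intro v hv; simp [hSdef, hv]
  have hxzS : (α x z).support ⊆ S := by
    intro v hv; simp [hSdef, hv]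
  -- linear combination map
  set φ : (Λ →₀ K) →ₗ[K] L := Finsupp.linearCombination K X with hφdef
  have hφ : ∀ f : Λ →₀ K, f.sum (fun v c => c • X v) = φ f := fun f => rfl
  -- convert finsupp sums over fixed index pairs to sums over S
  have hsum : ∀ (i j : Λ), (α i j).support ⊆ S →
      (α i j).sum (fun v c => c • X v) = ∑ v ∈ S, α i j v • X v := by
    intro i j h
    exact Finsupp.sum_of_support_subset _ h _ (fun v _ => zero_smul K (X v))
  -- convert goal finsums
  have hf1 : (∑ᶠ v, α x z v • fP br X α y v) = ∑ v ∈ S, α x z v • fP br X α y v := by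
    apply finsum_eq_sum_of_support_subset
    intro v hv
    simp only [Function.mem_support, Ne, smul_eq_zero, not_or] at hv
    exact hxzS (Finsupp.mem_support_iff.2 hv.1)
  have hf2 : (∑ᶠ v, α x y v • fP br X α v z) = ∑ v ∈ S, α x y v • fP br X α v z := by
    apply finsum_eq_sum_of_support_subset
    intro v hv
    simp only [Function.mem_support, Ne, smul_eq_zero, not_or] at hv
    exact hxyS (Finsupp.mem_support_iff.2 hv.1)
  have hf3 : (∑ᶠ v, α y z v • fP br X α x v) = ∑ v ∈ S, α y z v • fP br X α x v := by
    apply finsum_eq_sum_of_support_subset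
    intro v hv
    simp only [Function.mem_support, Ne, smul_eq_zero, not_or] at hv
    exact hyzS (Finsupp.mem_support_iff.2 hv.1)
  -- the coordinate hypothesis as a finsupp identity
  have hcross : ∑ v ∈ S, (α y z v • φ (α x v) - α x y v • φ (α v z)
      - (s * α x z v) • φ (α y v)) = 0 := by
    have hH : (∑ v ∈ S, (α y z v • (α x v) - α x y v • (α v z)
        - (s * α x z v) • (α y v)) : Λ →₀ K) = 0 := by
      ext u
      have h0 : ∀ v ∉ S, (α y z v * α x v u - α x y v * α v z u
          - s * (α x z v * α y v u)) = 0 := by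
        intro v hv
        have h1 : α x y v = 0 := by
          by_contra h; exact hv (hxyS (Finsupp.mem_support_iff.2 h))
        have h2 : α y z v = 0 := by
          by_contra h; exact hv (hyzS (Finsupp.mem_support_iff.2 h))
        have h3 : α x z v = 0 := by
          by_contra h; exact hv (hxzS (Finsupp.mem_support_iff.2 h))
        simp [h1, h2, h3]
      have := hjacCoord u
      rw [finsum_eq_sum_of_support_subset _ (s := S) (fun v hv => by
        by_contra hvS
        exact hv (h0 v hvS))] at this
      simpa [Finsupp.sum_apply, mul_assoc] using this
    calc ∑ v ∈ S, (α y z v • φ (α x v) - α x y v • φ (α v z)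
          - (s * α x z v) • φ (α y v))
        = φ (∑ v ∈ S, (α y z v • (α x v) - α x y v • (α v z)
            - (s * α x z v) • (α y v))) := by
          rw [map_sum]
          exact Finset.sum_congr rfl (fun v _ => by simp)
      _ = 0 := by rw [hH]; simp
  -- super Jacobi identity
  have hJ : br (br (X x) (X y)) (X z)
      = br (X x) (br (X y) (X z)) - s • br (X y) (br (X x) (X z)) := by
    have := hjac (p x) (p y) (p z) _ (hX x) _ (hX y) _ (hX z)
    rw [this]; module
  -- expand everything
  rw [hf1, hf2, hf3]
  simp only [fP, hsum x y hxyS, hsum y z hyzS, hsum x z hxzS, hφ]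
  simp only [map_sub, LinearMap.sub_apply, map_sum, LinearMap.sum_apply, map_smul,
    LinearMap.smul_apply, smul_sub, Finset.sum_sub_distrib, smul_smul]
  rw [hJ]
  rw [← sub_eq_zero]
  rw [← hcross]
  rw [Finset.sum_sub_distrib, Finset.sum_sub_distrib]
  simp only [Finset.smul_sum, smul_smul, neg_mul, neg_smul, Finset.sum_neg_distrib]
  module
end

section
/- Let L be a Lie superalgebra over a field K with char K ≠ 2, 3, Λ an index set, p : Λ → ℤ/2, X : Λ → L a family with X_i ∈ L_{p(i)} for all i, and α : Λ × Λ × Λ → K a family of scalars, finitely supported in the last argument for each fixed pair; for i, j ∈ Λ set f_{ij} := [X_i, X_j] − Σ_{v∈Λ} α_{ij}^v X_v. Let moreover t ∈ L be homogeneous of degree τ ∈ ℤ/2, let β : Λ × Λ → K be finitely supported in the last argument for each fixed first argument, and set g_i := [t, X_i] − Σ_{v∈Λ} β_i^v X_v. Fix a, b ∈ Λ and assume that for every u ∈ Λ: Σ_{c∈Λ} α_{ab}^c β_c^u = Σ_{v∈Λ} ( β_a^v α_{vb}^u + (−1)^{τ p(a)} β_b^v α_{av}^u ). Then [g_a, X_b]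 − [t, f_{ab}] = −(−1)^{τ p(a)}[X_a, g_b] − (−1)^{τ p(a)} Σ_{v∈Λ} β_b^v f_{av} − Σ_{v∈Λ} β_a^v f_{vb} + Σ_{v∈Λ} α_{ab}^v g_v. -/
/-- The element `g_i = [t, X_i] − Σ_v β_i^v X_v`. -/
def gP {K L Λ : Type*} [Field K] [AddCommGroup L] [Module K L]
    (br : L →ₗ[K] L →ₗ[K] L) (t : L) (X : Λ → L) (β : Λ → Λ →₀ K) (i : Λ) : L :=
  br t (X i) - (β i).sum fun v c => c • X v

private lemma finsum_smul_finsupp {K Λ : Type*} [Field K] {M : Type*} [AddCommGroup M]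
    [Module K M] (f : Λ →₀ K) (h : Λ → M) :
    ∑ᶠ v, f v • h v = ∑ v ∈ f.support, f v • h v := by
  apply finsum_eq_sum_of_support_subset
  intro x hx
  simp only [Function.mem_support] at hx
  simp only [Finset.coe_sort_coe, Finsupp.mem_support_iff, Finset.mem_coe]
  intro h0
  exact hx (by rw [h0, zero_smul])

private lemma swap_sum {K Λ : Type*} [Field K] {M : Type*} [AddCommGroup M] [Module K M]
    (s U : Finset Λ) (c : Λ → K) (d : Λ → Λ → K) (X : Λ → M) :
    ∑ v ∈ s, c v • ∑ u ∈ U, d v u • X u = ∑ u ∈ U, (∑ v ∈ s, c v * d v u) • X u := by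
  simp only [Finset.smul_sum, smul_smul]
  rw [Finset.sum_comm]
  simp only [Finset.sum_smul]

/-- Triviality of the intersection composition `⟨g_a, f_{ab}⟩_{tab}` in the
Gröbner–Shirshov basis analysis of the HNN-extension presentation. -/
theorem composition_ga_fab
    (K : Type*) [Field K] (hch2 : ringChar K ≠ 2) (hch3 : ringChar K ≠ 3)
    (L : Type*) [AddCommGroup L] [Module K L]
    (Lsub : ZMod 2 → Submodule K L)
    (hdirect : DirectSum.IsInternal Lsub)
    (br : L →ₗ[K] L →ₗ[K] L)
    (hgrade : ∀ (i j : ZMod 2), ∀ x ∈ Lsub i, ∀ y ∈ Lsub j, br x y ∈ Lsub (i + j))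
    (hanti : ∀ (i j : ZMod 2), ∀ x ∈ Lsub i, ∀ y ∈ Lsub j,
      br x y = - sgn K i j • br y x)
    (hjac : ∀ (i j k : ZMod 2), ∀ x ∈ Lsub i, ∀ y ∈ Lsub j, ∀ z ∈ Lsub k,
      br x (br y z) = br (br x y) z + sgn K i j • br y (br x z))
    (Λ : Type*) (p : Λ → ZMod 2) (X : Λ → L)
    (hX : ∀ i, X i ∈ Lsub (p i))
    (α : Λ → Λ → Λ →₀ K)
    (t : L) (τ : ZMod 2) (ht : t ∈ Lsub τ)
    (β : Λ → Λ →₀ K)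
    (a b : Λ)
    (hder : ∀ u : Λ,
      ∑ᶠ c, α a b c * β c u
        = ∑ᶠ v, (β a v * α v b u + sgn K τ (p a) * (β b v * α a v u))) :
    br (gP br t X β a) (X b) - br t (fP br X α a b)
      = - sgn K τ (p a) • br (X a) (gP br t X β b)
        - sgn K τ (p a) • ∑ᶠ v, β b v • fP br X α a v
        - ∑ᶠ v, β a v • fP br X α v b
        + ∑ᶠ v, α a b v • gP br t X β v := by
  classical
  set σ : K := sgn K τ (p a) with hσ
  set sab := (α a b).support with hsab
  set sa := (β a).support with hsa
  set sb := (β b).support with hsb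
  set U : Finset Λ :=
    sab.biUnion (fun v => (β v).support) ∪ sa.biUnion (fun v => (α v b).support)
      ∪ sb.biUnion (fun v => (α a v).support) with hU
  -- inner sums over a fixed finset U
  have hinner_ab : ∀ v ∈ sab, ((β v).sum fun u d => d • X u) = ∑ u ∈ U, β v u • X u := by
    intro v hv
    rw [Finsupp.sum]
    apply Finset.sum_subset
    · intro u hu
      simp only [hU, Finset.mem_union, Finset.mem_biUnion]
      exact Or.inl (Or.inl ⟨v, hv, hu⟩)
    · intro u _ hu
      rw [Finsupp.notMem_support_iff.mp hu, zero_smul]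
  have hinner_a : ∀ v ∈ sa, ((α v b).sum fun u d => d • X u) = ∑ u ∈ U, α v b u • X u := by
    intro v hv
    rw [Finsupp.sum]
    apply Finset.sum_subset
    · intro u hu
      simp only [hU, Finset.mem_union, Finset.mem_biUnion]
      exact Or.inl (Or.inr ⟨v, hv, hu⟩)
    · intro u _ hu
      rw [Finsupp.notMem_support_iff.mp hu, zero_smul]
  have hinner_b : ∀ v ∈ sb, ((α a v).sum fun u d => d • X u) = ∑ u ∈ U, α a v u • X u := by
    intro v hv
    rw [Finsupp.sum]
    apply Finset.sum_subset
    · intro u hu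
      simp only [hU, Finset.mem_union, Finset.mem_biUnion]
      exact Or.inr ⟨v, hv, hu⟩
    · intro u _ hu
      rw [Finsupp.notMem_support_iff.mp hu, zero_smul]
  -- the derivation condition as finset sums
  have hderF : ∀ u : Λ,
      ∑ c ∈ sab, α a b c * β c u
        = ∑ v ∈ sa, β a v * α v b u + σ * ∑ v ∈ sb, β b v * α a v u := by
    intro u
    have h1 : ∑ᶠ c, α a b c * β c u = ∑ c ∈ sab, α a b c * β c u := by
      apply finsum_eq_sum_of_support_subset
      intro x hx
      simp only [Function.mem_support] at hx
      simp only [hsab, Finset.coe_sort_coe, Finsupp.mem_support_iff,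
        Finset.mem_coe]
      intro h0
      exact hx (by rw [h0, zero_mul])
    have h2 : (∑ᶠ v, (β a v * α v b u + σ * (β b v * α a v u)))
        = ∑ v ∈ sa ∪ sb, (β a v * α v b u + σ * (β b v * α a v u)) := by
      apply finsum_eq_sum_of_support_subset
      intro x hx
      simp only [Function.mem_support] at hx
      simp only [Finset.coe_union, Set.mem_union, Finset.mem_coe, hsa, hsb,
        Finsupp.mem_support_iff]
      by_contra h0
      push_neg at h0
      exact hx (by simp [h0.1, h0.2])
    have h3 : ∑ v ∈ sa ∪ sb, (β a v * α v b u + σ * (β b v * α a v u))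
        = ∑ v ∈ sa, β a v * α v b u + σ * ∑ v ∈ sb, β b v * α a v u := by
      rw [Finset.sum_add_distrib, ← Finset.mul_sum]
      congr 1
      · symm
        apply Finset.sum_subset Finset.subset_union_left
        intro v _ hv
        rw [Finsupp.notMem_support_iff.mp (by simpa [hsa] using hv), zero_mul]
      · congr 1
        symm
        apply Finset.sum_subset Finset.subset_union_right
        intro v _ hv
        rw [Finsupp.notMem_support_iff.mp (by simpa [hsb] using hv), zero_mul]
    rw [← h1, hder u, h2, h3]
  -- the key identity on the pure-X parts
  have hkey : ∑ v ∈ sab, α a b v • ∑ u ∈ U, β v u • X u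
      = ∑ v ∈ sa, β a v • ∑ u ∈ U, α v b u • X u
        + σ • ∑ v ∈ sb, β b v • ∑ u ∈ U, α a v u • X u := by
    rw [swap_sum, swap_sum, swap_sum, Finset.smul_sum]
    simp only [smul_smul]
    rw [← Finset.sum_add_distrib]
    apply Finset.sum_congr rfl
    intro u _
    rw [← add_smul, hderF u]
  -- the Jacobi identity for these elements
  have hjac' : br t (br (X a) (X b))
      = br (br t (X a)) (X b) + σ • br (X a) (br t (X b)) :=
    hjac τ (p a) (p b) t ht (X a) (hX a) (X b) (hX b)
  -- expand the six pieces
  have e_gA : br (gP br t X β a) (X b)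
      = br (br t (X a)) (X b) - ∑ v ∈ sa, β a v • br (X v) (X b) := by
    rw [gP, map_sub, LinearMap.sub_apply]
    congr 1
    simp only [Finsupp.sum, map_sum, map_smul, LinearMap.coe_sum, Finset.sum_apply,
      LinearMap.smul_apply, ← hsa]
  have e_tf : br t (fP br X α a b)
      = (br (br t (X a)) (X b) + σ • br (X a) (br t (X b)))
        - ∑ v ∈ sab, α a b v • br t (X v) := by
    rw [fP, map_sub, hjac']
    congr 1
    simp only [Finsupp.sum, map_sum, map_smul, ← hsab]
  have e_gB : br (X a) (gP br t X β b)
      = br (X a) (br t (X b)) - ∑ v ∈ sb, β b v • br (X a) (X v) := by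
    rw [gP, map_sub]
    congr 1
    simp only [Finsupp.sum, map_sum, map_smul, ← hsb]
  have e_fb : (∑ᶠ v, β b v • fP br X α a v)
      = ∑ v ∈ sb, β b v • br (X a) (X v) - ∑ v ∈ sb, β b v • ∑ u ∈ U, α a v u • X u := by
    rw [finsum_smul_finsupp (β b) (fun v => fP br X α a v), ← hsb, ← Finset.sum_sub_distrib]
    apply Finset.sum_congr rfl
    intro v hv
    rw [fP, hinner_b v hv, smul_sub]
  have e_fa : (∑ᶠ v, β a v • fP br X α v b)
      = ∑ v ∈ sa, β a v • br (X v) (X b) - ∑ v ∈ sa, β a v • ∑ u ∈ U, α v b u • X u := by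
    rw [finsum_smul_finsupp (β a) (fun v => fP br X α v b), ← hsa, ← Finset.sum_sub_distrib]
    apply Finset.sum_congr rfl
    intro v hv
    rw [fP, hinner_a v hv, smul_sub]
  have e_gv : (∑ᶠ v, α a b v • gP br t X β v)
      = ∑ v ∈ sab, α a b v • br t (X v) - ∑ v ∈ sab, α a b v • ∑ u ∈ U, β v u • X u := by
    rw [finsum_smul_finsupp (α a b) (fun v => gP br t X β v), ← hsab, ← Finset.sum_sub_distrib]
    apply Finset.sum_congr rfl
    intro v hv
    rw [gP, hinner_ab v hv, smul_sub]
  rw [e_gA, e_tf, e_gB, e_fb, e_fa, e_gv, hkey]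
  module
end

section
/- Let L be a Lie superalgebra over a field K with char K ≠ 2, 3, Λ an index set, p : Λ → ℤ/2, X : Λ → L a family with X_i ∈ L_{p(i)} for all i, and α : Λ × Λ × Λ → K a family of scalars, finitely supported in the last argument for each fixed pair; for i, j ∈ Λ set f_{ij} := [X_i, X_j] − Σ_{v∈Λ} α_{ij}^v X_v. Fix x, y ∈ Λ with p(x) = 1, and assume that for every u ∈ Λ: Σ_{v∈Λ} ( 2 α_{xy}^v α_{xv}^u − α_{xx}^v α_{vy}^u ) = 0. Then (1/2)[f_{xx}, X_y] − [X_x, f_{xy}] = −(1/2)[f_{xx}, X_y] + [X_x, f_{xy}] − Σ_{v∈Λ} α_{xx}^v f_{vy} + 2 Σ_{v∈Λ} α_{xy}^v f_{xv}. -/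
/-- The computation of the intersection composition `⟨f_{xx}, f_{xy}⟩_{xxy}`, for `x` odd,
in the Gröbner–Shirshov basis analysis of the HNN-extension presentation. -/
theorem composition_fxx_fxy
    (K : Type*) [Field K] (hch2 : ringChar K ≠ 2) (hch3 : ringChar K ≠ 3)
    (L : Type*) [AddCommGroup L] [Module K L]
    (Lsub : ZMod 2 → Submodule K L)
    (hdirect : DirectSum.IsInternal Lsub)
    (br : L →ₗ[K] L →ₗ[K] L)
    (hgrade : ∀ (i j : ZMod 2), ∀ x ∈ Lsub i, ∀ y ∈ Lsub j, br x y ∈ Lsub (i + j))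
    (hanti : ∀ (i j : ZMod 2), ∀ x ∈ Lsub i, ∀ y ∈ Lsub j,
      br x y = - sgn K i j • br y x)
    (hjac : ∀ (i j k : ZMod 2), ∀ x ∈ Lsub i, ∀ y ∈ Lsub j, ∀ z ∈ Lsub k,
      br x (br y z) = br (br x y) z + sgn K i j • br y (br x z))
    (Λ : Type*) (p : Λ → ZMod 2) (X : Λ → L)
    (hX : ∀ i, X i ∈ Lsub (p i))
    (α : Λ → Λ → Λ →₀ K)
    (x y : Λ) (hx : p x = 1)
    (hjacCoord : ∀ u : Λ,
      ∑ᶠ v, (2 * (α x y v * α x v u) - α x x v * α v y u) = 0) :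
    (2 : K)⁻¹ • br (fP br X α x x) (X y) - br (X x) (fP br X α x y)
      = - (2 : K)⁻¹ • br (fP br X α x x) (X y)
        + br (X x) (fP br X α x y)
        - ∑ᶠ v, α x x v • fP br X α v y
        + (2 : K) • ∑ᶠ v, α x y v • fP br X α x v := by
  classical
  have h2 : (2:K) ≠ 0 := Ring.two_ne_zero hch2
  set T : Finset Λ := (α x x).support ∪ (α x y).support with hT
  set U : Finset Λ := T.biUnion (fun v => (α v y).support ∪ (α x v).support) with hU
  have hsubxx : (α x x).support ⊆ T := Finset.subset_union_left
  have hsubxy : (α x y).support ⊆ T := Finset.subset_union_right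
  have hsubvy : ∀ v ∈ T, (α v y).support ⊆ U := fun v hv =>
    Finset.Subset.trans Finset.subset_union_left
      (Finset.subset_biUnion_of_mem (fun v => (α v y).support ∪ (α x v).support) hv)
  have hsubxv : ∀ v ∈ T, (α x v).support ⊆ U := fun v hv =>
    Finset.Subset.trans Finset.subset_union_right
      (Finset.subset_biUnion_of_mem (fun v => (α v y).support ∪ (α x v).support) hv)
  have hzT : ∀ v, v ∉ T → α x x v = 0 ∧ α x y v = 0 := by
    intro v hv
    rw [hT, Finset.mem_union, Finsupp.mem_support_iff, Finsupp.mem_support_iff] at hv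
    push_neg at hv
    exact hv
  have hSxx : (α x x).sum (fun v c => c • X v) = ∑ v ∈ T, α x x v • X v :=
    Finsupp.sum_of_support_subset _ hsubxx _ (fun i _ => zero_smul K (X i))
  have hSxy : (α x y).sum (fun v c => c • X v) = ∑ v ∈ T, α x y v • X v :=
    Finsupp.sum_of_support_subset _ hsubxy _ (fun i _ => zero_smul K (X i))
  have hSvy : ∀ v ∈ T, (α v y).sum (fun u c => c • X u) = ∑ u ∈ U, α v y u • X u :=
    fun v hv => Finsupp.sum_of_support_subset _ (hsubvy v hv) _ (fun i _ => zero_smul K (X i))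
  have hSxv : ∀ v ∈ T, (α x v).sum (fun u c => c • X u) = ∑ u ∈ U, α x v u • X u :=
    fun v hv => Finsupp.sum_of_support_subset _ (hsubxv v hv) _ (fun i _ => zero_smul K (X i))
  have hfin1 : (∑ᶠ v, α x x v • fP br X α v y) = ∑ v ∈ T, α x x v • fP br X α v y := by
    apply finsum_eq_finset_sum_of_support_subset
    intro v hv
    by_contra hvT
    simp [Function.mem_support, (hzT v hvT).1] at hv
  have hfin2 : (∑ᶠ v, α x y v • fP br X α x v) = ∑ v ∈ T, α x y v • fP br X α x v := by
    apply finsum_eq_finset_sum_of_support_subset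
    intro v hv
    by_contra hvT
    simp [Function.mem_support, (hzT v hvT).2] at hv
  have hcoord : ∀ u, ∑ v ∈ T, (2 * (α x y v * α x v u) - α x x v * α v y u) = 0 := by
    intro u
    rw [← hjacCoord u]
    refine (finsum_eq_finset_sum_of_support_subset _ ?_).symm
    intro v hv
    by_contra hvT
    simp [Function.mem_support, (hzT v hvT).1, (hzT v hvT).2] at hv
  -- key 1: super Jacobi at (x,x,y)
  have hXx : X x ∈ Lsub 1 := hx ▸ hX x
  have key1 : br (br (X x) (X x)) (X y)
      = (2:K) • br (X x) (br (X x) (X y)) := by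
    have h := hjac 1 1 (p y) (X x) hXx (X x) hXx (X y) (hX y)
    rw [sgn, if_pos ⟨rfl, rfl⟩, neg_one_smul] at h
    rw [two_smul]
    rw [eq_add_neg_iff_add_eq] at h
    exact h.symm
  -- key 2: coefficient cancellation
  have key2 : ∑ v ∈ T, α x x v • ((α v y).sum fun u c => c • X u)
      = (2:K) • ∑ v ∈ T, α x y v • ((α x v).sum fun u c => c • X u) := by
    calc ∑ v ∈ T, α x x v • ((α v y).sum fun u c => c • X u)
        = ∑ v ∈ T, ∑ u ∈ U, (α x x v * α v y u) • X u := by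
          refine Finset.sum_congr rfl fun v hv => ?_
          rw [hSvy v hv, Finset.smul_sum]
          exact Finset.sum_congr rfl fun u _ => (smul_smul _ _ _)
      _ = ∑ u ∈ U, (∑ v ∈ T, α x x v * α v y u) • X u := by
          rw [Finset.sum_comm]
          exact Finset.sum_congr rfl fun u _ => (Finset.sum_smul).symm
      _ = ∑ u ∈ U, (∑ v ∈ T, 2 * (α x y v * α x v u)) • X u := by
          refine Finset.sum_congr rfl fun u _ => ?_
          congr 1
          have h := hcoord u
          rw [Finset.sum_sub_distrib] at h
          exact (sub_eq_zero.mp h).symm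
      _ = ∑ v ∈ T, ∑ u ∈ U, ((2:K) * (α x y v * α x v u)) • X u := by
          rw [Finset.sum_comm]
          exact Finset.sum_congr rfl fun u _ => Finset.sum_smul
      _ = (2:K) • ∑ v ∈ T, α x y v • ((α x v).sum fun u c => c • X u) := by
          rw [Finset.smul_sum]
          refine Finset.sum_congr rfl fun v hv => ?_
          rw [hSxv v hv, Finset.smul_sum, Finset.smul_sum]
          refine Finset.sum_congr rfl fun u _ => ?_
          rw [smul_smul, smul_smul]; ring_nf
  -- bracket linearity
  have hbr1 : br (fP br X α x x) (X y)
      = br (br (X x) (X x)) (X y) - ∑ v ∈ T, α x x v • br (X v) (X y) := by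
    rw [fP, hSxx, map_sub, LinearMap.sub_apply]
    congr 1
    rw [map_sum]
    rw [LinearMap.coe_sum, Finset.sum_apply]
    exact Finset.sum_congr rfl fun v _ => by rw [map_smul]; rfl
  have hbr2 : br (X x) (fP br X α x y)
      = br (X x) (br (X x) (X y)) - ∑ v ∈ T, α x y v • br (X x) (X v) := by
    rw [fP, hSxy, map_sub, map_sum]
    congr 1
    exact Finset.sum_congr rfl fun v _ => by rw [map_smul]
  have hC : ∑ v ∈ T, α x x v • fP br X α v y
      = (∑ v ∈ T, α x x v • br (X v) (X y))
        - ∑ v ∈ T, α x x v • ((α v y).sum fun u c => c • X u) := by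
    rw [← Finset.sum_sub_distrib]
    exact Finset.sum_congr rfl fun v _ => by rw [fP, smul_sub]
  have hD : ∑ v ∈ T, α x y v • fP br X α x v
      = (∑ v ∈ T, α x y v • br (X x) (X v))
        - ∑ v ∈ T, α x y v • ((α x v).sum fun u c => c • X u) := by
    rw [← Finset.sum_sub_distrib]
    exact Finset.sum_congr rfl fun v _ => by rw [fP, smul_sub]
  rw [hfin1, hfin2, hbr1, hbr2, hC, hD, key1, key2]
  have e1 : (2:K)⁻¹ • ((2:K) • br (X x) (br (X x) (X y))
        - ∑ v ∈ T, α x x v • br (X v) (X y))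
      = br (X x) (br (X x) (X y))
        - (2:K)⁻¹ • ∑ v ∈ T, α x x v • br (X v) (X y) := by
    rw [smul_sub, smul_smul, inv_mul_cancel₀ h2, one_smul]
  have e2 : (∑ v ∈ T, α x x v • br (X v) (X y))
      = (2:K) • ((2:K)⁻¹ • ∑ v ∈ T, α x x v • br (X v) (X y)) := by
    rw [smul_smul, mul_inv_cancel₀ h2, one_smul]
  rw [neg_smul, e1]
  rw [show ((∑ v ∈ T, α x x v • br (X v) (X y))
      - (2:K) • ∑ v ∈ T, α x y v • ((α x v).sum fun u c => c • X u))
    = ((2:K) • ((2:K)⁻¹ • ∑ v ∈ T, α x x v • br (X v) (X y))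
      - (2:K) • ∑ v ∈ T, α x y v • ((α x v).sum fun u c => c • X u)) from by rw [← e2]]
  module
end

section
/- Let L be a Lie superalgebra over a field K with char K ≠ 2, 3, Λ an index set, p : Λ → ℤ/2, X : Λ → L a family with X_i ∈ L_{p(i)} for all i, and α : Λ × Λ × Λ → K a family of scalars, finitely supported in the last argument for each fixed pair; for i, j ∈ Λ set f_{ij} := [X_i, X_j] − Σ_{v∈Λ} α_{ij}^v X_v. Fix x, y ∈ Λ with p(y) = 1, and assume: (i) α_{ij}^l = −(−1)^{p(i)p(j)} α_{ji}^l for all i, j, l ∈ Λ; (ii) α_{ij}^l = 0 whenever p(l) ≠ p(i) + p(j); and (iii) for every u ∈ Λ: Σ_{v∈Λ} ( α_{yy}^v α_{xv}^u − α_{xy}^v α_{vy}^u − (−1)^{p(x)p(y)} α_{xy}^v α_{yv}^u ) = 0. Then [f_{xy}, X_y] − (1/2)[X_x, f_{yy}] = (1/2)[X_x, f_{yy}] − (−1)^{p(x)p(y)}[X_y, f_{xy}] − 2 Σ_{v∈Λ} α_{xy}^v f_{vy} + Σ_{v∈Λ} α_{yy}^v f_{xv}. -/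
/-- The computation of the intersection composition `⟨f_{xy}, f_{yy}⟩_{xyy}`, for `y` odd,
in the Gröbner–Shirshov basis analysis of the HNN-extension presentation. -/
theorem composition_fxy_fyy
    (K : Type*) [Field K] (hch2 : ringChar K ≠ 2) (hch3 : ringChar K ≠ 3)
    (L : Type*) [AddCommGroup L] [Module K L]
    (Lsub : ZMod 2 → Submodule K L)
    (hdirect : DirectSum.IsInternal Lsub)
    (br : L →ₗ[K] L →ₗ[K] L)
    (hgrade : ∀ (i j : ZMod 2), ∀ x ∈ Lsub i, ∀ y ∈ Lsub j, br x y ∈ Lsub (i + j))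
    (hanti : ∀ (i j : ZMod 2), ∀ x ∈ Lsub i, ∀ y ∈ Lsub j,
      br x y = - sgn K i j • br y x)
    (hjac : ∀ (i j k : ZMod 2), ∀ x ∈ Lsub i, ∀ y ∈ Lsub j, ∀ z ∈ Lsub k,
      br x (br y z) = br (br x y) z + sgn K i j • br y (br x z))
    (Λ : Type*) (p : Λ → ZMod 2) (X : Λ → L)
    (hX : ∀ i, X i ∈ Lsub (p i))
    (α : Λ → Λ → Λ →₀ K)
    (x y : Λ) (hy : p y = 1)
    (hαanti : ∀ i j l : Λ, α i j l = - sgn K (p i) (p j) * α j i l)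
    (hαgrade : ∀ i j l : Λ, p l ≠ p i + p j → α i j l = 0)
    (hjacCoord : ∀ u : Λ,
      ∑ᶠ v, (α y y v * α x v u - α x y v * α v y u
        - sgn K (p x) (p y) * (α x y v * α y v u)) = 0) :
    br (fP br X α x y) (X y) - (2 : K)⁻¹ • br (X x) (fP br X α y y)
      = (2 : K)⁻¹ • br (X x) (fP br X α y y)
        - sgn K (p x) (p y) • br (X y) (fP br X α x y)
        - (2 : K) • ∑ᶠ v, α x y v • fP br X α v y
        + ∑ᶠ v, α y y v • fP br X α x v := by
  classical
  have h2 : (2:K) ≠ 0 := Ring.two_ne_zero hch2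
  have hinv : (2:K) * (2:K)⁻¹ = 1 := mul_inv_cancel₀ h2
  set s : K := sgn K (p x) (p y) with hsdef
  have hz : ∀ j : ZMod 2, j = 0 ∨ j = 1 := by decide
  have hss : s * s = 1 := by
    rw [hsdef]; unfold sgn; split <;> norm_num
  have hsgn1 : ∀ i : ZMod 2, - sgn K 1 (i + 1) = sgn K i 1 := by
    intro i; rcases hz i with h | h <;> subst h <;> simp [sgn]
  have hsymm : sgn K (p y) (p x) = s := by
    rw [hsdef]
    rcases hz (p x) with h | h <;> rcases hz (p y) with h' | h' <;>
      simp [sgn, h, h']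
  have hpv : ∀ v, α x y v ≠ 0 → p v = p x + p y := by
    intro v hv; by_contra hne; exact hv (hαgrade x y v hne)
  have hbr_yv : ∀ v, α x y v ≠ 0 → br (X y) (X v) = s • br (X v) (X y) := by
    intro v hv
    rw [hanti (p y) (p v) (X y) (hX y) (X v) (hX v), hpv v hv, hy, hsgn1 (p x),
      hsdef, hy]
  have hαyv : ∀ v u, α x y v ≠ 0 → α y v u = s * α v y u := by
    intro v u hv
    rw [hαanti y v u, hpv v hv, hy, hsgn1 (p x), hsdef, hy]
  -- Jacobi identity instance
  have hJ := hjac (p y) (p x) (p y) (X y) (hX y) (X x) (hX x) (X y) (hX y)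
  have hyx : br (X y) (X x) = -s • br (X x) (X y) := by
    rw [hanti (p y) (p x) (X y) (hX y) (X x) (hX x), hsymm]
  rw [hyx, hsymm] at hJ
  simp only [map_smul, LinearMap.smul_apply] at hJ
  -- finsum to finset sums
  have hS1 : (∑ᶠ v, α x y v • fP br X α v y)
      = ∑ v ∈ (α x y).support, α x y v • fP br X α v y := by
    apply finsum_eq_finset_sum_of_support_subset
    intro v hv
    simp only [Function.mem_support] at hv
    simp only [Finset.mem_coe, Finsupp.mem_support_iff]
    intro h0; exact hv (by rw [h0, zero_smul])
  have hS2 : (∑ᶠ v, α y y v • fP br X α x v)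
      = ∑ v ∈ (α y y).support, α y y v • fP br X α x v := by
    apply finsum_eq_finset_sum_of_support_subset
    intro v hv
    simp only [Function.mem_support] at hv
    simp only [Finset.mem_coe, Finsupp.mem_support_iff]
    intro h0; exact hv (by rw [h0, zero_smul])
  -- expansions
  have e1 : br (fP br X α x y) (X y)
      = br (br (X x) (X y)) (X y)
        - ∑ v ∈ (α x y).support, α x y v • br (X v) (X y) := by
    simp only [fP, Finsupp.sum, map_sub, map_sum, map_smul, LinearMap.sub_apply,
      LinearMap.sum_apply, LinearMap.smul_apply]
  have e2 : br (X y) (fP br X α x y)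
      = br (X y) (br (X x) (X y))
        - s • ∑ v ∈ (α x y).support, α x y v • br (X v) (X y) := by
    simp only [fP, Finsupp.sum, map_sub, map_sum, map_smul]
    rw [Finset.smul_sum]
    congr 1
    apply Finset.sum_congr rfl
    intro v hv
    rw [hbr_yv v (Finsupp.mem_support_iff.mp hv), smul_comm]
  have e3 : br (X x) (fP br X α y y)
      = br (X x) (br (X y) (X y))
        - ∑ v ∈ (α y y).support, α y y v • br (X x) (X v) := by
    simp only [fP, Finsupp.sum, map_sub, map_sum, map_smul]
  have e4 : ∑ v ∈ (α x y).support, α x y v • fP br X α v y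
      = (∑ v ∈ (α x y).support, α x y v • br (X v) (X y))
        - ∑ v ∈ (α x y).support, α x y v • ((α v y).sum fun u c => c • X u) := by
    rw [← Finset.sum_sub_distrib]
    exact Finset.sum_congr rfl fun v _ => by rw [fP, smul_sub]
  have e5 : ∑ v ∈ (α y y).support, α y y v • fP br X α x v
      = (∑ v ∈ (α y y).support, α y y v • br (X x) (X v))
        - ∑ v ∈ (α y y).support, α y y v • ((α x v).sum fun u c => c • X u) := by
    rw [← Finset.sum_sub_distrib]
    exact Finset.sum_congr rfl fun v _ => by rw [fP, smul_sub]
  -- the key sum identity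
  set T : Finset Λ := (α x y).support ∪ (α y y).support with hT
  set U : Finset Λ := T.biUnion (fun v => (α v y).support ∪ (α x v).support) with hU
  have hin : ∀ (β : Λ →₀ K) (c : K), β.support ⊆ U →
      (c • β.sum fun u d => d • X u) = ∑ u ∈ U, (c * β u) • X u := by
    intro β c hsub
    rw [Finsupp.sum, Finset.smul_sum, Finset.sum_subset hsub
      (fun u _ hu => by rw [Finsupp.notMem_support_iff.mp hu, zero_smul, smul_zero])]
    exact Finset.sum_congr rfl fun u _ => smul_smul c (β u) (X u)
  have hcoef : ∀ u, ∑ v ∈ T, (α y y v * α x v u)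
      = ∑ v ∈ T, (2:K) * (α x y v * α v y u) := by
    intro u
    have h0 := hjacCoord u
    rw [finsum_eq_finset_sum_of_support_subset _ (s := T) ?_] at h0
    · have h1 : ∑ v ∈ T, (α y y v * α x v u - α x y v * α v y u
          - s * (α x y v * α y v u))
          = ∑ v ∈ T, (α y y v * α x v u - (2:K) * (α x y v * α v y u)) := by
        apply Finset.sum_congr rfl
        intro v _
        by_cases hv : α x y v = 0
        · rw [hv]; ring
        · rw [hαyv v u hv]; linear_combination (-(α x y v * α v y u)) * hss
      rw [h1, Finset.sum_sub_distrib] at h0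
      exact sub_eq_zero.mp h0
    · intro v hv
      simp only [Function.mem_support] at hv
      by_contra hvT
      simp only [hT, Finset.mem_coe, Finset.mem_union, Finsupp.mem_support_iff,
        not_or, not_not] at hvT
      exact hv (by rw [hvT.1, hvT.2]; ring)
  have key : ∑ v ∈ (α y y).support, α y y v • ((α x v).sum fun u c => c • X u)
      = (2:K) • ∑ v ∈ (α x y).support, α x y v • ((α v y).sum fun u c => c • X u) := by
    have hsubR : ∀ v ∈ T, (α v y).support ⊆ U := fun v hv u hu =>
      Finset.mem_biUnion.mpr ⟨v, hv, Finset.mem_union_left _ hu⟩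
    have hsubL : ∀ v ∈ T, (α x v).support ⊆ U := fun v hv u hu =>
      Finset.mem_biUnion.mpr ⟨v, hv, Finset.mem_union_right _ hu⟩
    have hL : ∑ v ∈ (α y y).support, α y y v • ((α x v).sum fun u c => c • X u)
        = ∑ v ∈ T, ∑ u ∈ U, (α y y v * α x v u) • X u := by
      rw [Finset.sum_subset (Finset.subset_union_right)
        (fun v _ hv => by rw [Finsupp.notMem_support_iff.mp hv, zero_smul])]
      exact Finset.sum_congr rfl fun v hv => hin _ _ (hsubL v hv)
    have hR : ∑ v ∈ (α x y).support, α x y v • ((α v y).sum fun u c => c • X u)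
        = ∑ v ∈ T, ∑ u ∈ U, (α x y v * α v y u) • X u := by
      rw [Finset.sum_subset (Finset.subset_union_left)
        (fun v _ hv => by rw [Finsupp.notMem_support_iff.mp hv, zero_smul])]
      exact Finset.sum_congr rfl fun v hv => hin _ _ (hsubR v hv)
    have hR2 : (2:K) • ∑ v ∈ T, ∑ u ∈ U, (α x y v * α v y u) • X u
        = ∑ v ∈ T, ∑ u ∈ U, ((2:K) * (α x y v * α v y u)) • X u := by
      rw [Finset.smul_sum]
      refine Finset.sum_congr rfl fun v _ => ?_
      rw [Finset.smul_sum]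
      exact Finset.sum_congr rfl fun u _ => smul_smul _ _ _
    rw [hL, hR, hR2, Finset.sum_comm]
    conv_rhs => rw [Finset.sum_comm]
    refine Finset.sum_congr rfl fun u _ => ?_
    rw [← Finset.sum_smul, ← Finset.sum_smul, hcoef u]
  -- assemble
  rw [hS1, hS2, e1, e2, e3, e4, e5, hJ, key]
  match_scalars
  all_goals try ring
  · linear_combination -hss
  · linear_combination -hss
  · linear_combination hss - hinv
  · linear_combination hinv
end

section
/- Let L be a Lie superalgebra over a field K with char K ≠ 2, 3, Λ an index set, p : Λ → ℤ/2, X : Λ → L a family with X_i ∈ L_{p(i)} for all i, and α : Λ × Λ × Λ → K a family of scalars, finitely supported in the last argument for each fixed pair; for i, j ∈ Λ set f_{ij} := [X_i, X_j] − Σ_{v∈Λ} α_{ij}^v X_v. Let moreover t ∈ L be homogeneous of degree τ ∈ ℤ/2, let β : Λ × Λ → K be finitely supported in the last argument for each fixed first argument, and set g_i := [t, X_i] − Σ_{v∈Λ} β_i^v X_v. Fix a ∈ Λ with p(a) = 1, and assume that for every u ∈ Λ: Σ_{c∈Λ} α_{aa}^c β_c^u = Σ_{v∈Λ} ( β_a^v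 α_{va}^u + (−1)^{τ p(a)} β_a^v α_{av}^u ). Then [g_a, X_a] − (1/2)[t, f_{aa}] = (1/2)[t, f_{aa}] − (−1)^{τ p(a)}[X_a, g_a] − (−1)^{τ p(a)} Σ_{v∈Λ} β_a^v f_{av} − Σ_{v∈Λ} β_a^v f_{va} + Σ_{v∈Λ} α_{aa}^v g_v. -/
/-- A finsum of `c v • F v` with `c` finitely supported is a finite sum over the support. -/
lemma finsum_smul_eq_sum {K M Λ : Type*} [Field K] [AddCommGroup M] [Module K M]
    (c : Λ →₀ K) (F : Λ → M) :
    ∑ᶠ v, c v • F v = ∑ v ∈ c.support, c v • F v := by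
  apply finsum_eq_finset_sum_of_support_subset
  intro v hv
  simp only [Function.mem_support, ne_eq] at hv
  simp only [Finset.mem_coe, Finsupp.mem_support_iff]
  intro h
  exact hv (by rw [h, zero_smul])

/-- Exchanging a finite sum of scaled finsupp-sums into a sum over a common index set. -/
lemma sum_smul_finsupp_sum {K M Λ : Type*} [Field K] [AddCommGroup M] [Module K M]
    (c : Λ → K) (γ : Λ → Λ →₀ K) (S U : Finset Λ) (X : Λ → M)
    (h : ∀ v ∈ S, (γ v).support ⊆ U) :
    ∑ v ∈ S, c v • ((γ v).sum fun u r => r • X u)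
      = ∑ u ∈ U, (∑ v ∈ S, c v * γ v u) • X u := by
  calc ∑ v ∈ S, c v • ((γ v).sum fun u r => r • X u)
      = ∑ v ∈ S, ∑ u ∈ U, (c v * γ v u) • X u := by
        refine Finset.sum_congr rfl fun v hv => ?_
        rw [Finsupp.sum, Finset.sum_subset (h v hv) (fun u _ hu => by
          rw [Finsupp.notMem_support_iff.1 hu, zero_smul]), Finset.smul_sum]
        exact Finset.sum_congr rfl fun u _ => smul_smul _ _ _
    _ = ∑ u ∈ U, (∑ v ∈ S, c v * γ v u) • X u := by
        rw [Finset.sum_comm]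
        exact Finset.sum_congr rfl fun u _ => (Finset.sum_smul).symm

/-- The computation of the intersection composition `⟨g_a, f_{aa}⟩_{taa}`, for `a` odd,
in the Gröbner–Shirshov basis analysis of the HNN-extension presentation. -/
theorem composition_ga_faa
    (K : Type*) [Field K] (hch2 : ringChar K ≠ 2) (hch3 : ringChar K ≠ 3)
    (L : Type*) [AddCommGroup L] [Module K L]
    (Lsub : ZMod 2 → Submodule K L)
    (hdirect : DirectSum.IsInternal Lsub)
    (br : L →ₗ[K] L →ₗ[K] L)
    (hgrade : ∀ (i j : ZMod 2), ∀ x ∈ Lsub i, ∀ y ∈ Lsub j, br x y ∈ Lsub (i + j))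
    (hanti : ∀ (i j : ZMod 2), ∀ x ∈ Lsub i, ∀ y ∈ Lsub j,
      br x y = - sgn K i j • br y x)
    (hjac : ∀ (i j k : ZMod 2), ∀ x ∈ Lsub i, ∀ y ∈ Lsub j, ∀ z ∈ Lsub k,
      br x (br y z) = br (br x y) z + sgn K i j • br y (br x z))
    (Λ : Type*) (p : Λ → ZMod 2) (X : Λ → L)
    (hX : ∀ i, X i ∈ Lsub (p i))
    (α : Λ → Λ → Λ →₀ K)
    (t : L) (τ : ZMod 2) (ht : t ∈ Lsub τ)
    (β : Λ → Λ →₀ K)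
    (a : Λ) (ha : p a = 1)
    (hder : ∀ u : Λ,
      ∑ᶠ c, α a a c * β c u
        = ∑ᶠ v, (β a v * α v a u + sgn K τ (p a) * (β a v * α a v u))) :
    br (gP br t X β a) (X a) - (2 : K)⁻¹ • br t (fP br X α a a)
      = (2 : K)⁻¹ • br t (fP br X α a a)
        - sgn K τ (p a) • br (X a) (gP br t X β a)
        - sgn K τ (p a) • ∑ᶠ v, β a v • fP br X α a v
        - ∑ᶠ v, β a v • fP br X α v a
        + ∑ᶠ v, α a a v • gP br t X β v := by
  classical
  have h2 : (2 : K) ≠ 0 := Ring.two_ne_zero hch2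
  have h2' : (2 : K)⁻¹ + (2 : K)⁻¹ = 1 := by
    rw [← two_mul, mul_inv_cancel₀ h2]
  set U : Finset Λ :=
    ((α a a).support.biUnion fun v => (β v).support)
      ∪ ((β a).support.biUnion fun v => (α v a).support)
      ∪ ((β a).support.biUnion fun v => (α a v).support) with hU
  -- the derivation hypothesis, as finite sums over supports
  have hder' : ∀ u : Λ,
      ∑ v ∈ (α a a).support, α a a v * β v u
        = ∑ v ∈ (β a).support, (β a v * α v a u + sgn K τ (p a) * (β a v * α a v u)) := by
    intro u
    have l1 : ∑ᶠ c, α a a c * β c u = ∑ v ∈ (α a a).support, α a a v * β v u := by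
      simpa only [smul_eq_mul] using finsum_smul_eq_sum (α a a) (fun c => β c u)
    have h := finsum_smul_eq_sum (β a) (fun v => α v a u + sgn K τ (p a) * α a v u)
    simp only [smul_eq_mul] at h
    have l2 : ∑ᶠ v, (β a v * α v a u + sgn K τ (p a) * (β a v * α a v u))
        = ∑ v ∈ (β a).support, (β a v * α v a u + sgn K τ (p a) * (β a v * α a v u)) := by
      calc ∑ᶠ v, (β a v * α v a u + sgn K τ (p a) * (β a v * α a v u))
          = ∑ᶠ v, β a v * (α v a u + sgn K τ (p a) * α a v u) :=
            finsum_congr fun v => by ring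
        _ = ∑ v ∈ (β a).support, β a v * (α v a u + sgn K τ (p a) * α a v u) := h
        _ = ∑ v ∈ (β a).support,
              (β a v * α v a u + sgn K τ (p a) * (β a v * α a v u)) :=
            Finset.sum_congr rfl fun v _ => by ring
    rw [← l1, ← l2]
    exact hder u
  -- support inclusions into the common index set U
  have hsupp1 : ∀ v ∈ (α a a).support, (β v).support ⊆ U := by
    intro v hv u hu
    exact Finset.mem_union_left _ (Finset.mem_union_left _ (Finset.mem_biUnion.2 ⟨v, hv, hu⟩))
  have hsupp2 : ∀ v ∈ (β a).support, (α v a).support ⊆ U := by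
    intro v hv u hu
    exact Finset.mem_union_left _ (Finset.mem_union_right _ (Finset.mem_biUnion.2 ⟨v, hv, hu⟩))
  have hsupp3 : ∀ v ∈ (β a).support, (α a v).support ⊆ U := by
    intro v hv u hu
    exact Finset.mem_union_right _ (Finset.mem_biUnion.2 ⟨v, hv, hu⟩)
  -- the key scalar identity, in vector form
  have E2 : ∑ v ∈ (α a a).support, α a a v • ((β v).sum fun u c => c • X u)
      = ∑ v ∈ (β a).support, β a v • ((α v a).sum fun u c => c • X u)
        + sgn K τ (p a) • ∑ v ∈ (β a).support, β a v • ((α a v).sum fun u c => c • X u) := by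
    rw [sum_smul_finsupp_sum (fun v => α a a v) β (α a a).support U X hsupp1,
        sum_smul_finsupp_sum (fun v => β a v) (fun v => α v a) (β a).support U X hsupp2,
        sum_smul_finsupp_sum (fun v => β a v) (fun v => α a v) (β a).support U X hsupp3,
        Finset.smul_sum, ← Finset.sum_add_distrib]
    refine Finset.sum_congr rfl fun u _ => ?_
    rw [hder' u, Finset.sum_add_distrib, add_smul, ← Finset.mul_sum, smul_smul]
  -- bilinearity facts
  have hW1 : br ((β a).sum fun v c => c • X v) (X a)
      = ∑ v ∈ (β a).support, β a v • br (X v) (X a) := by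
    rw [Finsupp.sum, map_sum]
    simp only [LinearMap.coe_sum, Finset.sum_apply]
    exact Finset.sum_congr rfl fun v _ => by rw [map_smul, LinearMap.smul_apply]
  have hW2 : br (X a) ((β a).sum fun v c => c • X v)
      = ∑ v ∈ (β a).support, β a v • br (X a) (X v) := by
    rw [Finsupp.sum, map_sum]
    exact Finset.sum_congr rfl fun v _ => by rw [map_smul]
  have hW3 : br t ((α a a).sum fun v c => c • X v)
      = ∑ v ∈ (α a a).support, α a a v • br t (X v) := by
    rw [Finsupp.sum, map_sum]
    exact Finset.sum_congr rfl fun v _ => by rw [map_smul]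
  -- expansions of f and g terms
  have hga : br (gP br t X β a) (X a)
      = br (br t (X a)) (X a) - ∑ v ∈ (β a).support, β a v • br (X v) (X a) := by
    rw [gP, map_sub, LinearMap.sub_apply, hW1]
  have hag : br (X a) (gP br t X β a)
      = br (X a) (br t (X a)) - ∑ v ∈ (β a).support, β a v • br (X a) (X v) := by
    rw [gP, map_sub, hW2]
  have hfaa : br t (fP br X α a a)
      = br t (br (X a) (X a)) - ∑ v ∈ (α a a).support, α a a v • br t (X v) := by
    rw [fP, map_sub, hW3]
  have hfav : ∑ v ∈ (β a).support, β a v • fP br X α a v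
      = ∑ v ∈ (β a).support, β a v • br (X a) (X v)
        - ∑ v ∈ (β a).support, β a v • ((α a v).sum fun u c => c • X u) := by
    rw [← Finset.sum_sub_distrib]
    exact Finset.sum_congr rfl fun v _ => by rw [fP, smul_sub]
  have hfva : ∑ v ∈ (β a).support, β a v • fP br X α v a
      = ∑ v ∈ (β a).support, β a v • br (X v) (X a)
        - ∑ v ∈ (β a).support, β a v • ((α v a).sum fun u c => c • X u) := by
    rw [← Finset.sum_sub_distrib]
    exact Finset.sum_congr rfl fun v _ => by rw [fP, smul_sub]
  have hgv : ∑ v ∈ (α a a).support, α a a v • gP br t X β v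
      = ∑ v ∈ (α a a).support, α a a v • br t (X v)
        - ∑ v ∈ (α a a).support, α a a v • ((β v).sum fun u c => c • X u) := by
    rw [← Finset.sum_sub_distrib]
    exact Finset.sum_congr rfl fun v _ => by rw [gP, smul_sub]
  -- the Jacobi identity at (τ, p a, p a)
  have J : br t (br (X a) (X a))
      = br (br t (X a)) (X a) + sgn K τ (p a) • br (X a) (br t (X a)) :=
    hjac τ (p a) (p a) t ht (X a) (hX a) (X a) (hX a)
  -- the finsums in the goal are finite sums
  have hS1 : ∑ᶠ v, β a v • fP br X α a v = ∑ v ∈ (β a).support, β a v • fP br X α a v :=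
    finsum_smul_eq_sum (β a) _
  have hS2 : ∑ᶠ v, β a v • fP br X α v a = ∑ v ∈ (β a).support, β a v • fP br X α v a :=
    finsum_smul_eq_sum (β a) _
  have hS3 : ∑ᶠ v, α a a v • gP br t X β v
      = ∑ v ∈ (α a a).support, α a a v • gP br t X β v :=
    finsum_smul_eq_sum (α a a) _
  -- the main identity, without the halves
  have key : br (gP br t X β a) (X a) + sgn K τ (p a) • br (X a) (gP br t X β a)
      + sgn K τ (p a) • ∑ v ∈ (β a).support, β a v • fP br X α a v
      + ∑ v ∈ (β a).support, β a v • fP br X α v a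
      - ∑ v ∈ (α a a).support, α a a v • gP br t X β v
      = br t (fP br X α a a) := by
    rw [hga, hag, hfav, hfva, hgv, hfaa, J, E2]
    module
  have hhalf : br t (fP br X α a a) - (2 : K)⁻¹ • br t (fP br X α a a)
      = (2 : K)⁻¹ • br t (fP br X α a a) := by
    rw [sub_eq_iff_eq_add, ← add_smul, h2', one_smul]
  rw [hS1, hS2, hS3]
  calc br (gP br t X β a) (X a) - (2 : K)⁻¹ • br t (fP br X α a a)
      = (br (gP br t X β a) (X a) + sgn K τ (p a) • br (X a) (gP br t X β a)
          + sgn K τ (p a) • ∑ v ∈ (β a).support, β a v • fP br X α a v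
          + ∑ v ∈ (β a).support, β a v • fP br X α v a
          - ∑ v ∈ (α a a).support, α a a v • gP br t X β v)
        - (2 : K)⁻¹ • br t (fP br X α a a)
        - sgn K τ (p a) • br (X a) (gP br t X β a)
        - sgn K τ (p a) • ∑ v ∈ (β a).support, β a v • fP br X α a v
        - ∑ v ∈ (β a).support, β a v • fP br X α v a
        + ∑ v ∈ (α a a).support, α a a v • gP br t X β v := by module
    _ = br t (fP br X α a a) - (2 : K)⁻¹ • br t (fP br X α a a)
        - sgn K τ (p a) • br (X a) (gP br t X β a)
        - sgn K τ (p a) • ∑ v ∈ (β a).support, β a v • fP br X α a v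
        - ∑ v ∈ (β a).support, β a v • fP br X α v a
        + ∑ v ∈ (α a a).support, α a a v • gP br t X β v := by rw [key]
    _ = (2 : K)⁻¹ • br t (fP br X α a a)
        - sgn K τ (p a) • br (X a) (gP br t X β a)
        - sgn K τ (p a) • ∑ v ∈ (β a).support, β a v • fP br X α a v
        - ∑ v ∈ (β a).support, β a v • fP br X α v a
        + ∑ v ∈ (α a a).support, α a a v • gP br t X β v := by rw [hhalf]
end
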